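/- For θ ∈ [0, π/2), define τ₀ = cos(θ/2)e₀ + sin(θ/2)e₁, τ₁ = sin(θ/2)e₀ + cos(θ/2)e₁ in ℂ², and the two-qubit unit vectors Σ'₁ = (1/√2)(e₀ ⊗ τ₀ + e₁ ⊗ τ₁) and Σ'₂ = (1/√2)(e₀ ⊗ τ₁ + e₁ ⊗ τ₀). Then all four partial traces Tr₁ |Σ'₁⟩⟨Σ'₁|, Tr₂ |Σ'₁⟩⟨Σ'₁|, Tr₁ |Σ'₂⟩⟨Σ'₂|, Tr₂ |Σ'₂⟩⟨Σ'₂| are equal to the 2×2 matrix with diagonal entries 1/2 and off-diagonal entries (sin θ)/2, whose eigenvalues are (1 + sin θ)/2 and (1 − sin θ)/2, both strictly positive. Hence Σ'₁ and Σ'₂ mask each other and are both entangled, with equal (nonzero) entanglement entropy, for every θ ∈ [0, π/2). -/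

import Mathlib

open Matrix Kronecker Polynomial ComplexOrder

noncomputable section

/-- Partial trace over the first subsystem of a two-qubit (4×4) matrix. -/
def ptr1 (M : Matrix (Fin 2 × Fin 2) (Fin 2 × Fin 2) ℂ) : Matrix (Fin 2) (Fin 2) ℂ :=
  Matrix.of fun j l => ∑ i, M (i, j) (i, l)

/-- Partial trace over the second subsystem of a two-qubit (4×4) matrix. -/
def ptr2 (M : Matrix (Fin 2 × Fin 2) (Fin 2 × Fin 2) ℂ) : Matrix (Fin 2) (Fin 2) ℂ :=
  Matrix.of fun i k => ∑ j, M (i, j) (k, j)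

/-- Rank-one projection |v⟩⟨v| of a qubit vector. -/
def proj2 (v : Fin 2 → ℂ) : Matrix (Fin 2) (Fin 2) ℂ :=
  Matrix.of fun i j => v i * star (v j)

/-- Rank-one projection |v⟩⟨v| of a two-qubit vector. -/
def proj4 (v : Fin 2 × Fin 2 → ℂ) : Matrix (Fin 2 × Fin 2) (Fin 2 × Fin 2) ℂ :=
  Matrix.of fun p q => v p * star (v q)

/-- Kronecker (tensor) product of two qubit vectors. -/
def tens (a b : Fin 2 → ℂ) : Fin 2 × Fin 2 → ℂ := fun p => a p.1 * b p.2

/-- Unit (normalized) vector. -/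
def UnitVec {α : Type*} [Fintype α] (v : α → ℂ) : Prop := ∑ i, v i * star (v i) = 1

/-- Hermitian inner product of two-qubit vectors. -/
def inner4 (v w : Fin 2 × Fin 2 → ℂ) : ℂ := ∑ p, star (v p) * w p

/-- A 2×2 density matrix: positive semidefinite with unit trace. -/
def IsDensity2 (A : Matrix (Fin 2) (Fin 2) ℂ) : Prop := A.PosSemidef ∧ A.trace = 1

/-- Separability of a two-qubit density matrix: a finite convex combination of
Kronecker products of 2×2 density matrices. -/
def Separable4 (ρ : Matrix (Fin 2 × Fin 2) (Fin 2 × Fin 2) ℂ) : Prop :=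
  ∃ (n : ℕ) (w : Fin n → ℝ) (A B : Fin n → Matrix (Fin 2) (Fin 2) ℂ),
    (∀ i, 0 ≤ w i) ∧ (∑ i, w i = 1) ∧
    (∀ i, IsDensity2 (A i)) ∧ (∀ i, IsDensity2 (B i)) ∧
    ρ = ∑ i, (w i : ℂ) • (A i ⊗ₖ B i)

/-- Standard basis vector e₀ of ℂ². -/
def e₀ : Fin 2 → ℂ := ![1, 0]

/-- Standard basis vector e₁ of ℂ². -/
def e₁ : Fin 2 → ℂ := ![0, 1]

/-- τ₀-type vector: cos(t/2)e₀ + sin(t/2)e₁. -/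
def tau0 (t : ℝ) : Fin 2 → ℂ := ![(Real.cos (t/2) : ℂ), (Real.sin (t/2) : ℂ)]

/-- τ₁-type vector: sin(t/2)e₀ + cos(t/2)e₁. -/
def tau1 (t : ℝ) : Fin 2 → ℂ := ![(Real.sin (t/2) : ℂ), (Real.cos (t/2) : ℂ)]

/-- Σ'₁ = (1/√2)(e₀ ⊗ τ₀ + e₁ ⊗ τ₁). -/
def sig1' (t : ℝ) : Fin 2 × Fin 2 → ℂ :=
  fun q => ((Real.sqrt 2)⁻¹ : ℂ) * (tens e₀ (tau0 t) q + tens e₁ (tau1 t) q)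

/-- Σ'₂ = (1/√2)(e₀ ⊗ τ₁ + e₁ ⊗ τ₀). -/
def sig2' (t : ℝ) : Fin 2 × Fin 2 → ℂ :=
  fun q => ((Real.sqrt 2)⁻¹ : ℂ) * (tens e₀ (tau1 t) q + tens e₁ (tau0 t) q)

/-- The common reduced state: diagonal entries 1/2, off-diagonal entries (sin θ)/2. -/
def redMat (t : ℝ) : Matrix (Fin 2) (Fin 2) ℂ :=
  !![(1/2 : ℂ), ((Real.sin t / 2 : ℝ) : ℂ); ((Real.sin t / 2 : ℝ) : ℂ), (1/2 : ℂ)]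

/-!
Both states have a symmetric coefficient matrix `(1/√2) !![p, q; q, p]`, with
`(p, q) = (cos (θ/2), sin (θ/2))` for `Σ'₁` and the swapped pair for `Σ'₂`. For such a vector
both partial traces equal `!![p² + q², 2pq; 2pq, p² + q²] / 2`, which is `redMat θ` since
`p² + q² = 1` and `2pq = sin θ`. A product vector `a ⊗ b` has a singular coefficient matrix,
whereas here the determinant is `±(p² - q²)/2 = ±(cos θ)/2 ≠ 0`; the same condition `cos θ ≠ 0`
gives `|sin θ| < 1`, i.e. both eigenvalues `(1 ± sin θ)/2` are positive.
-/

def bellLike (a b : ℝ) : Fin 2 × Fin 2 → ℂ := fun p => if p.1 = p.2 then a else b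

def bellReduced (a b : ℝ) : Matrix (Fin 2) (Fin 2) ℂ :=
  !![(a ^ 2 + b ^ 2 : ℂ), 2 * a * b; 2 * a * b, a ^ 2 + b ^ 2]

theorem ptr1_proj4_bellLike (a b : ℝ) :
    ptr1 (proj4 (bellLike a b)) = bellReduced a b := by
  ext i j
  fin_cases i <;> fin_cases j <;>
    simp [ptr1, proj4, bellLike, bellReduced, Fin.sum_univ_two, Complex.conj_ofReal] <;> ring

theorem ptr2_proj4_bellLike (a b : ℝ) :
    ptr2 (proj4 (bellLike a b)) = bellReduced a b := by
  ext i j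
  fin_cases i <;> fin_cases j <;>
    simp [ptr2, proj4, bellLike, bellReduced, Fin.sum_univ_two, Complex.conj_ofReal] <;> ring

theorem tens_apply_zero_zero_mul_one_one (x y : Fin 2 → ℂ) :
    tens x y (0, 0) * tens x y (1, 1) = tens x y (0, 1) * tens x y (1, 0) := by
  simp only [tens]; ring

theorem bellLike_ne_tens {a b : ℝ} (hab : a ^ 2 ≠ b ^ 2) (x y : Fin 2 → ℂ) :
    bellLike a b ≠ tens x y := by
  intro h
  have := tens_apply_zero_zero_mul_one_one x y
  simp only [← h, bellLike, ↓reduceIte, zero_ne_one, one_ne_zero] at this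
  exact hab (by exact_mod_cast (by linear_combination this : (a : ℂ) ^ 2 = b ^ 2))

theorem sig1'_eq_bellLike (t : ℝ) :
    sig1' t = bellLike (Real.cos (t / 2) / √2) (Real.sin (t / 2) / √2) := by
  ext ⟨i, j⟩
  fin_cases i <;> fin_cases j <;> simp [sig1', bellLike, tens, e₀, e₁, tau0, tau1, div_eq_inv_mul]

theorem sig2'_eq_bellLike (t : ℝ) :
    sig2' t = bellLike (Real.sin (t / 2) / √2) (Real.cos (t / 2) / √2) := by
  ext ⟨i, j⟩
  fin_cases i <;> fin_cases j <;> simp [sig2', bellLike, tens, e₀, e₁, tau0, tau1, div_eq_inv_mul]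

theorem cos_half_div_sqrt_two_sq_add (t : ℝ) :
    (Real.cos (t / 2) / √2) ^ 2 + (Real.sin (t / 2) / √2) ^ 2 = 1 / 2 := by
  rw [div_pow, div_pow, Real.sq_sqrt zero_le_two, ← add_div, Real.cos_sq_add_sin_sq]

theorem cos_half_div_sqrt_two_sq_sub (t : ℝ) :
    (Real.cos (t / 2) / √2) ^ 2 - (Real.sin (t / 2) / √2) ^ 2 = Real.cos t / 2 := by
  rw [div_pow, div_pow, Real.sq_sqrt zero_le_two, ← sub_div, ← Real.cos_two_mul',
    mul_div_cancel₀ t two_ne_zero]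

theorem two_mul_cos_half_div_sqrt_two_mul (t : ℝ) :
    2 * (Real.cos (t / 2) / √2) * (Real.sin (t / 2) / √2) = Real.sin t / 2 := by
  have := Real.sin_two_mul (t / 2)
  rw [mul_div_cancel₀ t two_ne_zero] at this
  field_simp
  rw [Real.sq_sqrt zero_le_two, this]; ring

theorem bellReduced_eq_redMat {t a b : ℝ} (hsum : a ^ 2 + b ^ 2 = 1 / 2)
    (hprod : 2 * a * b = Real.sin t / 2) : bellReduced a b = redMat t := by
  rw [bellReduced, redMat, ← hprod]
  have : ((a ^ 2 + b ^ 2 : ℝ) : ℂ) = 1 / 2 := by rw [hsum]; norm_num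
  push_cast at this ⊢
  rw [this]

theorem charpoly_fin_two_of_circulant {R : Type*} [CommRing R] [Nontrivial R] (d o : R) :
    (!![d, o; o, d]).charpoly = (X - C (d + o)) * (X - C (d - o)) := by
  rw [charpoly_fin_two, trace_fin_two_of, det_fin_two_of]
  simp only [map_add, map_sub, map_mul]
  ring

theorem abs_sin_lt_one_of_cos_ne_zero {t : ℝ} (h : Real.cos t ≠ 0) : |Real.sin t| < 1 := by
  rw [Ne, Real.cos_eq_zero_iff_sin_eq] at h
  push Not at h
  exact abs_lt.2
    ⟨(Real.neg_one_le_sin t).lt_of_ne h.2.symm, (Real.sin_le_one t).lt_of_ne h.1⟩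

/-- Σ'₁ and Σ'₂ mask each other — all four partial traces equal the matrix
with diagonal 1/2 and off-diagonal (sin θ)/2, whose eigenvalues (1 ± sin θ)/2 are strictly
positive — and both states are entangled (not product vectors) for every θ ∈ [0, π/2). -/
theorem nonorthogonal_masked_pair_equally_entangled
    (θ : ℝ) (hθ : θ ∈ Set.Ico (0 : ℝ) (Real.pi / 2)) :
    ptr1 (proj4 (sig1' θ)) = redMat θ ∧
    ptr2 (proj4 (sig1' θ)) = redMat θ ∧
    ptr1 (proj4 (sig2' θ)) = redMat θ ∧
    ptr2 (proj4 (sig2' θ)) = redMat θ ∧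
    (redMat θ).charpoly
      = (X - C (((1 + Real.sin θ) / 2 : ℝ) : ℂ)) * (X - C (((1 - Real.sin θ) / 2 : ℝ) : ℂ)) ∧
    0 < (1 + Real.sin θ) / 2 ∧ 0 < (1 - Real.sin θ) / 2 ∧
    (¬ ∃ a b : Fin 2 → ℂ, sig1' θ = tens a b) ∧
    (¬ ∃ a b : Fin 2 → ℂ, sig2' θ = tens a b) := by
  set c := Real.cos (θ / 2) / √2
  set s := Real.sin (θ / 2) / √2
  have hsum := cos_half_div_sqrt_two_sq_add θ
  have hprod := two_mul_cos_half_div_sqrt_two_mul θ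
  have hred₁ : bellReduced c s = redMat θ := bellReduced_eq_redMat hsum hprod
  have hred₂ : bellReduced s c = redMat θ := bellReduced_eq_redMat (by linarith) (by linarith)
  have hcos : 0 < Real.cos θ := Real.cos_pos_of_mem_Ioo ⟨by linarith [Real.pi_pos, hθ.1], hθ.2⟩
  have hsin := abs_lt.1 (abs_sin_lt_one_of_cos_ne_zero hcos.ne')
  have hcs : c ^ 2 ≠ s ^ 2 := by linarith [cos_half_div_sqrt_two_sq_sub θ]
  refine ⟨?_, ?_, ?_, ?_, ?_, by linarith, by linarith, ?_, ?_⟩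
  · rw [sig1'_eq_bellLike, ptr1_proj4_bellLike, hred₁]
  · rw [sig1'_eq_bellLike, ptr2_proj4_bellLike, hred₁]
  · rw [sig2'_eq_bellLike, ptr1_proj4_bellLike, hred₂]
  · rw [sig2'_eq_bellLike, ptr2_proj4_bellLike, hred₂]
  · rw [redMat, charpoly_fin_two_of_circulant]
    push_cast; ring_nf
  · rintro ⟨x, y, h⟩
    exact bellLike_ne_tens hcs x y (sig1'_eq_bellLike θ ▸ h)
  · rintro ⟨x, y, h⟩
    exact bellLike_ne_tens hcs.symm x y (sig2'_eq_bellLike θ ▸ h)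

end
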